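/- Let (G,d) be a metric space and (𝔛,d_𝔛) a metric space of Markov type p with constant M, for some p ∈ [1,∞). Let f : G → 𝔛 be a 1-Lipschitz map. Let X ⊆ G be a finite subset, K a Markov transition kernel on X reversible with respect to a probability measure π on X, and let (Z_t)_{t≥0} be the stationary Markov chain on X with transition kernel K and Z_0 distributed according to π. Then for every t ∈ ℕ with E[d(Z_t,Z_0)^p] > 0, ρ_f( ( (1/2) E[d(Z_t,Z_0)^p] )^{1/p} ) ≤ ( 2 M^p t · diam_d(X)^p · E[d_𝔛(f(Z_1),f(Z_0))^p] / E[d(Z_t,Z_0)^p] )^{1/p}. -/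

import Mathlib

open scoped BigOperators

noncomputable section

/-- The compression function of a map between metric spaces. -/
def compressionFn {G : Type*} [PseudoMetricSpace G] {𝔛 : Type*} [PseudoMetricSpace 𝔛]
    (f : G → 𝔛) (t : ℝ) : ℝ :=
  sInf {r : ℝ | ∃ x y : G, t ≤ dist x y ∧ r = dist (f x) (f y)}

open Classical in
/-- `t`-step transition probabilities of the kernel `K`. -/
def kernelPow {X : Type*} [Fintype X] (K : X → X → ℝ) : ℕ → X → X → ℝ
  | 0 => fun u v => if u = v then 1 else 0
  | t + 1 => fun u v => ∑ w, K u w * kernelPow K t w v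

/-- `𝔛` has Markov type `p` with constant `M`: for every stationary reversible Markov
chain `(Z_t)` on a finite state space and every map `h` into `𝔛`,
`E[d(h(Z_t), h(Z_0))^p] ≤ M^p t E[d(h(Z_1), h(Z_0))^p]`. -/
def HasMarkovType (𝔛 : Type*) [PseudoMetricSpace 𝔛] (p M : ℝ) : Prop :=
  ∀ (n : ℕ) (K : Fin n → Fin n → ℝ) (π : Fin n → ℝ),
    (∀ u v, 0 ≤ K u v) → (∀ u, ∑ v, K u v = 1) →
    (∀ u, 0 ≤ π u) → (∑ u, π u = 1) →
    (∀ u v, π u * K u v = π v * K v u) →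
    ∀ (h : Fin n → 𝔛) (t : ℕ),
      ∑ u, ∑ v, π u * kernelPow K t u v * dist (h u) (h v) ^ p ≤
        M ^ p * t * ∑ u, ∑ v, π u * K u v * dist (h u) (h v) ^ p

/-!
Write `D = E[d(Z_t, Z_0)^p]` and `B = M^p t E[d(f Z_1, f Z_0)^p]`. Markov type, applied to
`f` along the chain, gives `E[d(f Z_t, f Z_0)^p] ≤ B`. Since `d(Z_t, Z_0)^p ≤ diam(X)^p`, the
event `d(Z_t, Z_0)^p ≥ D/2` has probability at least `D / (2 diam(X)^p)`; if
`d(f Z_t, f Z_0)^p` exceeded `2 diam(X)^p B / D` throughout this event, its expectation would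
exceed `B`. A pair `(Z_0, Z_t)` in the event where it does not is a witness for the bound on
the compression function.
-/

open Finset

theorem compressionFn_le_dist {G 𝔛 : Type*} [PseudoMetricSpace G] [PseudoMetricSpace 𝔛]
    (f : G → 𝔛) {s : ℝ} {x y : G} (h : s ≤ dist x y) :
    compressionFn f s ≤ dist (f x) (f y) :=
  csInf_le ⟨0, by rintro _ ⟨_, _, _, rfl⟩; exact dist_nonneg⟩ ⟨x, y, h, rfl⟩

section Weights

variable {ι : Type*} [Fintype ι] {w a b : ι → ℝ}

theorem sum_mul_le_add_mul_sum_filter {R c : ℝ} (hw : ∀ i, 0 ≤ w i) (hw1 : ∑ i, w i = 1)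
    (haR : ∀ i, a i ≤ R) (hc : 0 ≤ c) :
    ∑ i, w i * a i ≤ c + R * ∑ i with c ≤ a i, w i := by
  rw [← sum_filter_add_sum_filter_not univ (fun i => c ≤ a i)]
  have hlarge : ∑ i with c ≤ a i, w i * a i ≤ R * ∑ i with c ≤ a i, w i := by
    rw [mul_sum]
    exact sum_le_sum fun i _ => by rw [mul_comm R]; exact mul_le_mul_of_nonneg_left (haR i) (hw i)
  have hsmall : ∑ i with ¬c ≤ a i, w i * a i ≤ c :=
    calc ∑ i with ¬c ≤ a i, w i * a i ≤ ∑ i with ¬c ≤ a i, w i * c :=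
          sum_le_sum fun i hi => mul_le_mul_of_nonneg_left (not_le.1 (mem_filter.1 hi).2).le (hw i)
      _ ≤ ∑ i, w i * c :=
          sum_le_sum_of_subset_of_nonneg (filter_subset _ _) fun i _ _ => mul_nonneg (hw i) hc
      _ = c := by rw [← sum_mul, hw1, one_mul]
  linarith

theorem exists_half_le_and_le_of_sum_mul_le {R B D : ℝ} (hw : ∀ i, 0 ≤ w i)
    (hw1 : ∑ i, w i = 1) (haR : ∀ i, a i ≤ R) (hb : ∀ i, 0 ≤ b i) (hD0 : 0 < D)
    (hD : D ≤ ∑ i, w i * a i) (hB : ∑ i, w i * b i ≤ B) :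
    ∃ i, D / 2 ≤ a i ∧ b i ≤ 2 * R * B / D := by
  by_contra! hbig
  set μ := ∑ i with D / 2 ≤ a i, w i
  have hmass : D / 2 ≤ R * μ := by
    linarith [sum_mul_le_add_mul_sum_filter hw hw1 haR (c := D / 2) (by positivity)]
  have hμ : 0 < μ := by
    refine lt_of_le_of_ne (sum_nonneg fun i _ => hw i) fun h => ?_
    rw [← h, mul_zero] at hmass
    linarith
  have hμ' : ∑ i with D / 2 ≤ a i, (0 : ℝ) < μ := by simpa using hμ
  obtain ⟨i, hi, hwi⟩ := exists_lt_of_sum_lt hμ'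
  have hB0 : 0 ≤ B := (sum_nonneg fun i _ => mul_nonneg (hw i) (hb i)).trans hB
  have hlt : 2 * R * B / D * μ < ∑ i, w i * b i :=
    calc 2 * R * B / D * μ = ∑ i with D / 2 ≤ a i, w i * (2 * R * B / D) := by
          rw [← sum_mul, mul_comm]
      _ < ∑ i with D / 2 ≤ a i, w i * b i :=
          sum_lt_sum (fun j hj => mul_le_mul_of_nonneg_left (hbig j (mem_filter.1 hj).2).le (hw j))
            ⟨i, hi, mul_lt_mul_of_pos_left (hbig i (mem_filter.1 hi).2) hwi⟩
      _ ≤ ∑ i, w i * b i :=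
          sum_le_sum_of_subset_of_nonneg (filter_subset _ _) fun j _ _ => mul_nonneg (hw j) (hb j)
  have hge : B ≤ 2 * R * B / D * μ := by
    rw [div_mul_eq_mul_div, le_div_iff₀ hD0]
    nlinarith [mul_le_mul_of_nonneg_left hmass hB0]
  linarith

end Weights

section KernelPow

variable {ι : Type*} [Fintype ι] {K : ι → ι → ℝ}

theorem kernelPow_nonneg (hK0 : ∀ u v, 0 ≤ K u v) (t : ℕ) (u v : ι) :
    0 ≤ kernelPow K t u v := by
  induction t generalizing u v with
  | zero => simp only [kernelPow]; split_ifs <;> norm_num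
  | succ t ih => exact sum_nonneg fun w _ => mul_nonneg (hK0 u w) (ih w v)

theorem sum_kernelPow (hK1 : ∀ u, ∑ v, K u v = 1) (t : ℕ) (u : ι) :
    ∑ v, kernelPow K t u v = 1 := by
  induction t generalizing u with
  | zero => classical simp [kernelPow]
  | succ t ih =>
    simp only [kernelPow]
    rw [sum_comm]
    simp only [← mul_sum, ih, mul_one, hK1]

theorem kernelPow_comp_equiv {κ : Type*} [Fintype κ] (e : κ ≃ ι) (t : ℕ) (i j : κ) :
    kernelPow (fun a b => K (e a) (e b)) t i j = kernelPow K t (e i) (e j) := by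
  induction t generalizing i j with
  | zero => classical exact if_congr e.apply_eq_iff_eq.symm rfl rfl
  | succ t ih =>
    simp only [kernelPow, ih]
    exact e.sum_comp fun w => K (e i) w * kernelPow K t w (e j)

end KernelPow

theorem HasMarkovType.sum_le {𝔛 : Type*} [PseudoMetricSpace 𝔛] {p M : ℝ}
    (hmt : HasMarkovType 𝔛 p M) {ι : Type*} [Fintype ι] {K : ι → ι → ℝ} {π : ι → ℝ}
    (hK0 : ∀ u v, 0 ≤ K u v) (hK1 : ∀ u, ∑ v, K u v = 1)
    (hπ0 : ∀ u, 0 ≤ π u) (hπ1 : ∑ u, π u = 1) (hrev : ∀ u v, π u * K u v = π v * K v u)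
    (h : ι → 𝔛) (t : ℕ) :
    ∑ u, ∑ v, π u * kernelPow K t u v * dist (h u) (h v) ^ p ≤
      M ^ p * t * ∑ u, ∑ v, π u * K u v * dist (h u) (h v) ^ p := by
  let e := (Fintype.equivFin ι).symm
  have hmt_e := hmt _ (fun i j => K (e i) (e j)) (fun i => π (e i)) (fun _ _ => hK0 _ _)
    (fun i => (e.sum_comp _).trans (hK1 _)) (fun _ => hπ0 _) ((e.sum_comp π).trans hπ1)
    (fun _ _ => hrev _ _) (fun i => h (e i)) t
  have hsum (g : ι → ι → ℝ) : ∑ i, ∑ j, g (e i) (e j) = ∑ u, ∑ v, g u v :=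
    Fintype.sum_equiv e _ _ fun i => Fintype.sum_equiv e _ _ fun j => rfl
  rw [← hsum, ← hsum fun u v => π u * K u v * dist (h u) (h v) ^ p]
  simpa only [kernelPow_comp_equiv] using hmt_e

theorem statement14_general
    {G : Type*} [MetricSpace G] {𝔛 : Type*} [MetricSpace 𝔛]
    (p M : ℝ) (hp : 1 ≤ p) (hmt : HasMarkovType 𝔛 p M)
    (f : G → 𝔛)
    (X : Finset G) (K : X → X → ℝ) (π : X → ℝ)
    (hK0 : ∀ u v, 0 ≤ K u v) (hK1 : ∀ u, ∑ v : X, K u v = 1)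
    (hπ0 : ∀ u, 0 ≤ π u) (hπ1 : ∑ u : X, π u = 1)
    (hrev : ∀ u v, π u * K u v = π v * K v u)
    (t : ℕ)
    (hpos : 0 < ∑ u : X, ∑ v : X, π u * kernelPow K t u v * dist (u : G) (v : G) ^ p) :
    compressionFn f
        (((1 / 2) * ∑ u : X, ∑ v : X,
          π u * kernelPow K t u v * dist (u : G) (v : G) ^ p) ^ (1 / p)) ≤
      (2 * M ^ p * t * Metric.diam (X : Set G) ^ p *
        (∑ u : X, ∑ v : X, π u * K u v * dist (f (u : G)) (f (v : G)) ^ p) /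
          (∑ u : X, ∑ v : X, π u * kernelPow K t u v * dist (u : G) (v : G) ^ p)) ^ (1 / p) := by
  have hp0 : 0 < p := by linarith
  set D := ∑ u : X, ∑ v : X, π u * kernelPow K t u v * dist (u : G) (v : G) ^ p
  set E := ∑ u : X, ∑ v : X, π u * K u v * dist (f (u : G)) (f (v : G)) ^ p
  obtain ⟨⟨u, v⟩, hfar, hclose⟩ := exists_half_le_and_le_of_sum_mul_le
    (w := fun q : X × X => π q.1 * kernelPow K t q.1 q.2)
    (a := fun q => dist (q.1 : G) q.2 ^ p) (b := fun q => dist (f q.1) (f q.2) ^ p)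
    (R := Metric.diam (X : Set G) ^ p) (B := M ^ p * t * E)
    (fun q => mul_nonneg (hπ0 _) (kernelPow_nonneg hK0 t _ _))
    (by simp only [Fintype.sum_prod_type, ← mul_sum, sum_kernelPow hK1, mul_one, hπ1])
    (fun q => Real.rpow_le_rpow dist_nonneg
      (Metric.dist_le_diam_of_mem X.finite_toSet.isBounded q.1.2 q.2.2) hp0.le)
    (fun _ => Real.rpow_nonneg dist_nonneg p) hpos
    (by rw [Fintype.sum_prod_type])
    (by rw [Fintype.sum_prod_type]; exact hmt.sum_le hK0 hK1 hπ0 hπ1 hrev (f ∘ (↑)) t)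
  have hclose' : dist (f u) (f v) ^ p ≤ 2 * M ^ p * t * Metric.diam (X : Set G) ^ p * E / D :=
    hclose.trans_eq (by ring)
  rw [one_div p]
  calc _ ≤ dist (f u) (f v) := compressionFn_le_dist f <|
          (Real.rpow_inv_le_iff_of_pos (by positivity) dist_nonneg hp0).2 (by linarith)
    _ ≤ _ := (Real.le_rpow_inv_iff_of_pos dist_nonneg
          ((Real.rpow_nonneg dist_nonneg p).trans hclose') hp0).2 hclose'

theorem statement14
    {G : Type*} [MetricSpace G] {𝔛 : Type*} [MetricSpace 𝔛]
    (p M : ℝ) (hp : 1 ≤ p) (hM : 0 < M) (hmt : HasMarkovType 𝔛 p M)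
    (f : G → 𝔛) (hf : ∀ x y : G, dist (f x) (f y) ≤ dist x y)
    (X : Finset G) (K : X → X → ℝ) (π : X → ℝ)
    (hK0 : ∀ u v, 0 ≤ K u v) (hK1 : ∀ u, ∑ v : X, K u v = 1)
    (hπ0 : ∀ u, 0 ≤ π u) (hπ1 : ∑ u : X, π u = 1)
    (hrev : ∀ u v, π u * K u v = π v * K v u)
    (t : ℕ)
    (hpos : 0 < ∑ u : X, ∑ v : X, π u * kernelPow K t u v * dist (u : G) (v : G) ^ p) :
    compressionFn f
        (((1 / 2) * ∑ u : X, ∑ v : X,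
          π u * kernelPow K t u v * dist (u : G) (v : G) ^ p) ^ (1 / p)) ≤
      (2 * M ^ p * t * Metric.diam (X : Set G) ^ p *
        (∑ u : X, ∑ v : X, π u * K u v * dist (f (u : G)) (f (v : G)) ^ p) /
          (∑ u : X, ∑ v : X, π u * kernelPow K t u v * dist (u : G) (v : G) ^ p)) ^ (1 / p) :=
  statement14_general p M hp hmt f X K π hK0 hK1 hπ0 hπ1 hrev t hpos

end
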